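/- Let R be a ring, σ an automorphism of R, δ a σ-derivation, S = R[x; σ, δ], M a right R-module, and m ∈ M ⊗_R S a good polynomial of degree k with leading coefficient m_k. Set I := σ^{-k}(ann_R(m_k R)). Then ann_R(mR) = I and ann_S(mR) = IS. -/
import Mathlib


open MulOpposite

/-- `δ` is a `σ`-derivation of the ring `R`. -/
def IsSigmaDeriv {R : Type} [Ring R] (σ : R ≃+* R) (δ : R → R) : Prop :=
  (∀ a b, δ (a + b) = δ a + δ b) ∧ ∀ a b, δ (a * b) = σ a * δ b + δ a * b

/-- A presentation of the skew polynomial ring `S = R[x; σ, δ]`: `S` is a ring containing an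
image of `R` via `ι`, with an element `x` satisfying `x·r = σ(r)·x + δ(r)`, and `S` is free
as a left `R`-module with basis the powers of `x`. -/
structure SkewPoly (R S : Type) [Ring R] [Ring S] (σ : R ≃+* R) (δ : R → R) : Type where
  ι : R →+* S
  x : S
  comm : ∀ r : R, x * ι r = ι (σ r) * x + ι (δ r)
  basis : Function.Bijective fun c : ℕ →₀ R => c.sum fun i a => ι a * x ^ i

/-- A presentation of the induced right `S`-module `M ⊗_R S` of a right `R`-module `M`
(right modules are encoded as modules over the opposite ring): `N` is a right `S`-module
containing `M` via `j`, compatibly with the right `R`-actions, and every element of `N` is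
uniquely a polynomial `∑ (j mᵢ)·xⁱ` with coefficients in `M`. -/
structure Induced (R S M N : Type) [Ring R] [Ring S] [AddCommGroup M] [Module Rᵐᵒᵖ M]
    [AddCommGroup N] [Module Sᵐᵒᵖ N] {σ : R ≃+* R} {δ : R → R}
    (sp : SkewPoly R S σ δ) : Type where
  j : M →+ N
  j_smul : ∀ (r : R) (m : M), j (op r • m) = op (sp.ι r) • j m
  free : Function.Bijective fun c : ℕ →₀ M => c.sum fun i m => op (sp.x ^ i) • j m

variable {R S M N : Type} [Ring R] [Ring S] [AddCommGroup M] [Module Rᵐᵒᵖ M]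
  [AddCommGroup N] [Module Sᵐᵒᵖ N] {σ : R ≃+* R} {δ : R → R}

/-- The polynomial `∑ (j mᵢ)·xⁱ` in `M ⊗_R S` with coefficient family `c`. -/
def pol (sp : SkewPoly R S σ δ) (im : Induced R S M N sp) (c : ℕ →₀ M) : N :=
  c.sum fun i m => op (sp.x ^ i) • im.j m

/-- `ν ∈ M ⊗_R S` has degree exactly `k`. -/
def DegEq (sp : SkewPoly R S σ δ) (im : Induced R S M N sp) (ν : N) (k : ℕ) : Prop :=
  ∃ c : ℕ →₀ M, pol sp im c = ν ∧ c k ≠ 0 ∧ ∀ i, k < i → c i = 0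

/-- `ν` is a good polynomial of degree `k`: whenever `ν·r ≠ 0` for `r ∈ R`,
`deg (ν·r) = deg ν = k`. -/
def GoodAt (sp : SkewPoly R S σ δ) (im : Induced R S M N sp) (ν : N) (k : ℕ) : Prop :=
  DegEq sp im ν k ∧ ∀ r : R, op (sp.ι r) • ν ≠ 0 → DegEq sp im (op (sp.ι r) • ν) k

/-- `ν` is a good polynomial. -/
def Good (sp : SkewPoly R S σ δ) (im : Induced R S M N sp) (ν : N) : Prop :=
  ∃ k, GoodAt sp im ν k

-- auxiliary development
namespace Stmt18

noncomputable def polE (sp : SkewPoly R S σ δ) (im : Induced R S M N sp) :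
    (ℕ →₀ M) ≃+ N :=
  AddEquiv.mk' (Equiv.ofBijective _ im.free) (by
    intro a b
    simp only [Equiv.ofBijective_apply]
    exact Finsupp.sum_add_index' (fun i => by simp) (fun i m₁ m₂ => by
      rw [map_add, smul_add]))

lemma polE_apply (sp : SkewPoly R S σ δ) (im : Induced R S M N sp) (c : ℕ →₀ M) :
    polE sp im c = pol sp im c := rfl

lemma coeff_pol (sp : SkewPoly R S σ δ) (im : Induced R S M N sp) (c : ℕ →₀ M) :
    (polE sp im).symm (pol sp im c) = c := (polE sp im).symm_apply_apply c

lemma pol_coeff (sp : SkewPoly R S σ δ) (im : Induced R S M N sp) (w : N) :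
    pol sp im ((polE sp im).symm w) = w := (polE sp im).apply_symm_apply w

lemma smul_op_mul (A B : S) (n : N) : op (A * B) • n = op B • (op A • n) := by
  rw [op_mul, mul_smul]

lemma pol_mapDomain (sp : SkewPoly R S σ δ) (im : Induced R S M N sp) (i : ℕ) (c : ℕ →₀ M) :
    pol sp im (c.mapDomain (· + i)) = op (sp.x ^ i) • pol sp im c := by
  unfold pol
  rw [Finsupp.smul_sum]
  rw [Finsupp.sum_mapDomain_index (fun a => by simp) (fun a m₁ m₂ => by
    rw [map_add, smul_add])]
  refine Finsupp.sum_congr fun j _ => ?_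
  rw [← mul_smul, ← op_mul, ← pow_add]

lemma coeff_smul_pow (sp : SkewPoly R S σ δ) (im : Induced R S M N sp) (i : ℕ) (w : N) :
    (polE sp im).symm (op (sp.x ^ i) • w) = ((polE sp im).symm w).mapDomain (· + i) := by
  conv_lhs => rw [← pol_coeff sp im w, ← pol_mapDomain, coeff_pol]

lemma coeff_smul_pow_apply (sp : SkewPoly R S σ δ) (im : Induced R S M N sp) (i : ℕ)
    (w : N) (t : ℕ) :
    (polE sp im).symm (op (sp.x ^ i) • w) (t + i) = (polE sp im).symm w t := by
  rw [coeff_smul_pow, Finsupp.mapDomain_apply (add_left_injective i)]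

lemma smul_iota_iota (sp : SkewPoly R S σ δ) (r s : R) (w : N) :
    op (sp.ι (s * r)) • w = op (sp.ι r) • (op (sp.ι s) • w) := by
  rw [map_mul, op_mul, mul_smul]

lemma sigma_iter_mul (n : ℕ) (a b : R) :
    (⇑σ)^[n] (a * b) = (⇑σ)^[n] a * (⇑σ)^[n] b := by
  induction n generalizing a b with
  | zero => simp
  | succ n ih => rw [Function.iterate_succ_apply, Function.iterate_succ_apply,
      Function.iterate_succ_apply, map_mul, ih]

lemma sigma_iter_zero (n : ℕ) : (⇑σ)^[n] (0:R) = 0 := by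
  induction n with
  | zero => simp
  | succ n ih => rw [Function.iterate_succ_apply, map_zero, ih]

lemma pol_single (sp : SkewPoly R S σ δ) (im : Induced R S M N sp) (i : ℕ) (m : M) :
    pol sp im (Finsupp.single i m) = op (sp.x ^ i) • im.j m :=
  Finsupp.sum_single_index (by simp)

/-- Key lemma: the coefficients of `j m · xⁱ · ι a`. -/
lemma coeff_pow_iota (sp : SkewPoly R S σ δ) (im : Induced R S M N sp) (i : ℕ) (a : R)
    (m : M) :
    (polE sp im).symm (op (sp.x ^ i * sp.ι a) • im.j m) i = op ((⇑σ)^[i] a) • m ∧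
      ∀ t, i < t → (polE sp im).symm (op (sp.x ^ i * sp.ι a) • im.j m) t = 0 := by
  induction i generalizing a with
  | zero =>
    have h2 : op (sp.x ^ 0 * sp.ι a) • im.j m = pol sp im (Finsupp.single 0 (op a • m)) := by
      rw [pow_zero, one_mul, ← im.j_smul, pol_single, pow_zero, op_one, one_smul]
    rw [h2, coeff_pol]
    constructor
    · simp
    · intro t ht
      rw [Finsupp.single_apply_eq_zero.mpr]
      intro he; omega
  | succ i ih =>
    have hx : sp.x ^ (i + 1) * sp.ι a
        = sp.x ^ i * sp.ι (σ a) * sp.x + sp.x ^ i * sp.ι (δ a) := by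
      rw [pow_succ, mul_assoc, sp.comm, mul_add, ← mul_assoc]
    have hsplit : op (sp.x ^ (i+1) * sp.ι a) • im.j m
        = op sp.x • (op (sp.x ^ i * sp.ι (σ a)) • im.j m)
          + op (sp.x ^ i * sp.ι (δ a)) • im.j m := by
      rw [hx, op_add, add_smul, smul_op_mul]
    set w1 := op (sp.x ^ i * sp.ι (σ a)) • im.j m with hw1
    set w2 := op (sp.x ^ i * sp.ι (δ a)) • im.j m with hw2
    have hxpow : op sp.x • w1 = op (sp.x ^ 1) • w1 := by rw [pow_one]
    have hcoeff : (polE sp im).symm (op (sp.x ^ (i+1) * sp.ι a) • im.j m)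
        = ((polE sp im).symm w1).mapDomain (· + 1) + (polE sp im).symm w2 := by
      rw [hsplit, map_add, hxpow, coeff_smul_pow]
    constructor
    · rw [hcoeff]
      have e1 : (((polE sp im).symm w1).mapDomain (· + 1)) (i + 1)
          = (polE sp im).symm w1 i := Finsupp.mapDomain_apply (add_left_injective 1) _ i
      rw [Finsupp.add_apply, e1, (ih (σ a)).1, (ih (δ a)).2 (i+1) (by omega),
        Function.iterate_succ_apply, add_zero]
    · intro t ht
      obtain ⟨u, rfl⟩ : ∃ u, t = u + 1 := ⟨t - 1, by omega⟩
      rw [hcoeff, Finsupp.add_apply,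
        Finsupp.mapDomain_apply (add_left_injective 1) _ u,
        (ih (σ a)).2 u (by omega), (ih (δ a)).2 (u+1) (by omega), add_zero]

/-- Coefficients of `w · ι a` when `w` has degree ≤ k. -/
lemma coeff_smul_iota (sp : SkewPoly R S σ δ) (im : Induced R S M N sp) (a : R) (w : N)
    (k : ℕ) (hw : ∀ t, k < t → (polE sp im).symm w t = 0) :
    (polE sp im).symm (op (sp.ι a) • w) k = op ((⇑σ)^[k] a) • (polE sp im).symm w k ∧
      ∀ t, k < t → (polE sp im).symm (op (sp.ι a) • w) t = 0 := by
  classical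
  set c := (polE sp im).symm w with hcdef
  have hw' : op (sp.ι a) • w = c.sum fun i m => op (sp.x ^ i * sp.ι a) • im.j m := by
    conv_lhs => rw [← pol_coeff sp im w]
    rw [← hcdef]
    unfold pol
    rw [Finsupp.smul_sum]
    exact Finsupp.sum_congr fun i _ => (smul_op_mul _ _ _).symm
  have hmap : (polE sp im).symm (op (sp.ι a) • w)
      = c.sum fun i m => (polE sp im).symm (op (sp.x ^ i * sp.ι a) • im.j m) := by
    rw [hw', map_finsuppSum]
  have happ : ∀ t, (polE sp im).symm (op (sp.ι a) • w) t
      = ∑ i ∈ c.support, (polE sp im).symm (op (sp.x ^ i * sp.ι a) • im.j (c i)) t := by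
    intro t
    rw [hmap, Finsupp.sum, Finsupp.finset_sum_apply]
  have hsupp : ∀ i ∈ c.support, i ≤ k := by
    intro i hi
    by_contra hlt
    exact (Finsupp.mem_support_iff.mp hi) (hw i (by omega))
  constructor
  · rw [happ k]
    rw [Finset.sum_eq_single k
      (fun i hi hne => (coeff_pow_iota sp im i a (c i)).2 k
        (lt_of_le_of_ne (hsupp i hi) hne))
      (fun hk => by rw [Finsupp.notMem_support_iff.mp hk]; simp)]
    exact (coeff_pow_iota sp im k a (c k)).1
  · intro t ht
    rw [happ t]
    refine Finset.sum_eq_zero fun i hi => ?_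
    exact (coeff_pow_iota sp im i a (c i)).2 t (lt_of_le_of_lt (hsupp i hi) ht)

lemma op_finsupp_sum_smul (b : ℕ →₀ R) (g : ℕ → R → S) (w : N) :
    op (b.sum g) • w = b.sum fun i a => op (g i a) • w := by
  rw [Finsupp.sum, Finsupp.sum, Finset.op_sum, Finset.sum_smul]

end Stmt18

open Stmt18

/-- if `m` is a good polynomial of degree `k` with leading coefficient `m_k`
and `I := σ⁻ᵏ(ann_R(m_k·R))`, then `ann_R(m·R) = I` and `ann_S(m·R) = I·S`. -/
theorem stmt18 (sp : SkewPoly R S σ δ) (im : Induced R S M N sp) (hδ : IsSigmaDeriv σ δ)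
    (ν : N) (k : ℕ) (c : ℕ →₀ M) (hc : pol sp im c = ν) (hk : c k ≠ 0)
    (htop : ∀ i, k < i → c i = 0) (hgood : GoodAt sp im ν k) :
    {r : R | ∀ s : R, op (sp.ι r) • (op (sp.ι s) • ν) = 0} =
        {r : R | ∀ s : R, op (s * (⇑σ)^[k] r) • c k = 0} ∧
      {f : S | ∀ s : R, op f • (op (sp.ι s) • ν) = 0} =
        {f : S | ∃ b : ℕ →₀ R, (∀ i, ∀ s : R, op (s * (⇑σ)^[k] (b i)) • c k = 0) ∧
          f = b.sum fun i a => sp.ι a * sp.x ^ i} := by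
  classical
  have hν : (polE sp im).symm ν = c := by rw [← hc, coeff_pol]
  have hwt : ∀ t, k < t → (polE sp im).symm ν t = 0 := fun t ht => by
    rw [hν]; exact htop t ht
  have hdeg : ∀ a : R, ∀ t, k < t → (polE sp im).symm (op (sp.ι a) • ν) t = 0 :=
    fun a t ht => (coeff_smul_iota sp im a ν k hwt).2 t ht
  have h1 : {r : R | ∀ s : R, op (sp.ι r) • (op (sp.ι s) • ν) = 0} =
      {r : R | ∀ s : R, op (s * (⇑σ)^[k] r) • c k = 0} := by
    ext r
    simp only [Set.mem_setOf_eq]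
    constructor
    · intro hr s
      have hli : Function.LeftInverse ((⇑σ)^[k]) ((⇑σ.symm)^[k]) :=
        Function.LeftInverse.iterate σ.apply_symm_apply k
      set a := (⇑σ.symm)^[k] s * r with ha
      have h0 : op (sp.ι a) • ν = 0 := by rw [ha, smul_iota_iota]; exact hr _
      have key := (coeff_smul_iota sp im a ν k hwt).1
      rw [h0, map_zero, hν, Finsupp.zero_apply] at key
      have he : (⇑σ)^[k] a = s * (⇑σ)^[k] r := by rw [ha, sigma_iter_mul, hli s]
      rw [he] at key
      exact key.symm
    · intro hr s
      by_contra hne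
      rw [← smul_iota_iota] at hne
      obtain ⟨c', hcp', hck', -⟩ := hgood.2 (s * r) hne
      apply hck'
      have hcc : c' = (polE sp im).symm (op (sp.ι (s * r)) • ν) := by
        rw [← hcp', coeff_pol]
      rw [hcc, (coeff_smul_iota sp im (s * r) ν k hwt).1, hν, sigma_iter_mul]
      exact hr ((⇑σ)^[k] s)
  refine ⟨h1, ?_⟩
  ext f
  simp only [Set.mem_setOf_eq]
  constructor
  · intro hfann
    obtain ⟨b, hb⟩ := sp.basis.surjective f
    refine ⟨b, ?_, hb.symm⟩
    have hK : ∀ d : ℕ, (∀ i, d < i → ∀ s : R, op (sp.ι (s * b i)) • ν = 0) →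
        ∀ s : R, op (sp.ι (s * b d)) • ν = 0 := by
      intro d hd s
      by_contra hne
      have hbd : b d ≠ 0 := by
        intro he; apply hne; rw [he, mul_zero, map_zero, op_zero, zero_smul]
      obtain ⟨c', hcp', hck', -⟩ := hgood.2 (s * b d) hne
      have hfb : f = b.sum fun i a => sp.ι a * sp.x ^ i := hb.symm
      have hterms : op f • (op (sp.ι s) • ν)
          = b.sum fun i a => op (sp.x ^ i) • (op (sp.ι (s * a)) • ν) := by
        rw [hfb, op_finsupp_sum_smul]
        refine Finsupp.sum_congr fun i _ => ?_
        rw [smul_op_mul, ← smul_iota_iota]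
      have hzero : (0 : ℕ →₀ M) = b.sum fun i a =>
          (polE sp im).symm (op (sp.x ^ i) • (op (sp.ι (s * a)) • ν)) := by
        rw [← map_finsuppSum, ← hterms, hfann s, map_zero]
      have happ : (0 : M) = ∑ i ∈ b.support,
          (polE sp im).symm (op (sp.x ^ i) • (op (sp.ι (s * b i)) • ν)) (k + d) := by
        calc (0 : M) = (0 : ℕ →₀ M) (k + d) := rfl
        _ = _ := by rw [hzero, Finsupp.sum, Finsupp.finset_sum_apply]
      have hd_mem : d ∈ b.support := Finsupp.mem_support_iff.2 hbd
      have hside : ∀ i ∈ b.support, i ≠ d →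
          (polE sp im).symm (op (sp.x ^ i) • (op (sp.ι (s * b i)) • ν)) (k + d) = 0 := by
        intro i _ hne'
        rcases lt_or_gt_of_ne hne' with hlt | hgt
        · have h2 : k + d = (k + (d - i)) + i := by omega
          rw [h2, coeff_smul_pow_apply]
          exact hdeg (s * b i) (k + (d - i)) (by omega)
        · rw [hd i hgt s, smul_zero, map_zero, Finsupp.zero_apply]
      rw [Finset.sum_eq_single_of_mem d hd_mem hside, coeff_smul_pow_apply] at happ
      rw [show (polE sp im).symm (op (sp.ι (s * b d)) • ν) = c' by
        rw [← hcp', coeff_pol]] at happ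
      exact hck' happ.symm
    have hbig : ∀ i, b.support.sup id < i → b i = 0 := by
      intro i hi
      by_contra hne
      have hle := Finset.le_sup (f := id) (Finsupp.mem_support_iff.2 hne)
      simp only [id] at hle
      omega
    have hmain : ∀ n d, b.support.sup id ≤ d + n →
        ∀ s : R, op (sp.ι (s * b d)) • ν = 0 := by
      intro n
      induction n with
      | zero =>
        intro d hdn
        refine hK d fun i hi s => ?_
        rw [hbig i (by omega), mul_zero, map_zero, op_zero, zero_smul]
      | succ n ih =>
        intro d hdn
        exact hK d fun i hi => ih i (by omega)
    intro i s
    have hmem : b i ∈ {r : R | ∀ s : R, op (s * (⇑σ)^[k] r) • c k = 0} := by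
      rw [← h1]
      intro s'
      rw [← smul_iota_iota]
      exact hmain (b.support.sup id) i (by omega) s'
    exact hmem s
  · rintro ⟨b, hbI, rfl⟩ s
    rw [op_finsupp_sum_smul, Finsupp.sum]
    refine Finset.sum_eq_zero fun i _ => ?_
    have hmem : ∀ s', op (sp.ι (b i)) • (op (sp.ι s') • ν) = 0 :=
      (Set.ext_iff.mp h1 (b i)).mpr (hbI i)
    rw [smul_op_mul, hmem s, smul_zero]
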